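/- If the typed unification algorithm on terms t1 and t2 outputs a solved set S, then the substitution determined by S is an idempotent most general unifier of t1 and t2. -/
import Mathlib


/-- Base types for constants. -/
inductive Ty : Type
  | int | float | atom | str
  deriving DecidableEq

/-- First-order terms: variables, typed constants, and compound terms. -/
inductive Term : Type
  | var : ℕ → Term
  | const : ℕ → Ty → Term
  | app : ℕ → List Term → Term

mutual
  /-- Application of a substitution to a term. -/
  def subst (θ : ℕ → Term) : Term → Term
    | .var x => θ x
    | .const c τ => .const c τ
    | .app f ts => .app f (substList θ ts)
  /-- Application of a substitution to a list of terms. -/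
  def substList (θ : ℕ → Term) : List Term → List Term
    | [] => []
    | t :: ts => subst θ t :: substList θ ts
end

mutual
  /-- Occurrence of a variable in a term. -/
  def occurs (x : ℕ) : Term → Bool
    | .var y => x == y
    | .const _ _ => false
    | .app _ ts => occursList x ts
  /-- Occurrence of a variable in a list of terms. -/
  def occursList (x : ℕ) : List Term → Bool
    | [] => false
    | t :: ts => occurs x t || occursList x ts
end

/-- Composition of substitutions: (θ ∘ η)(X) = θ(η(X)). -/
def comp (θ η : ℕ → Term) : ℕ → Term := fun x => subst θ (η x)

/-- The substitution binding the single variable x to t. -/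
def single (x : ℕ) (t : Term) : ℕ → Term := fun y => if y = x then t else .var y

/-- θ is a unifier of t₁ and t₂. -/
def IsUnifier (θ : ℕ → Term) (t₁ t₂ : Term) : Prop := subst θ t₁ = subst θ t₂

/-- θ is a most general unifier of t₁ and t₂. -/
def IsMGU (θ : ℕ → Term) (t₁ t₂ : Term) : Prop :=
  IsUnifier θ t₁ t₂ ∧ ∀ η, IsUnifier η t₁ t₂ → ∃ δ, ∀ x, η x = subst δ (θ x)

/-- θ is idempotent. -/
def Idempotent (θ : ℕ → Term) : Prop := ∀ t, subst θ (subst θ t) = subst θ t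

/-- Configurations of the typed unification algorithm: a multiset of equations
together with the Boolean flag, or the halting value wrong. -/
inductive Config : Type
  | state : Multiset (Term × Term) → Bool → Config
  | wrong : Config

/-- Application of a single binding to an equation. -/
def substEq (x : ℕ) (t : Term) (e : Term × Term) : Term × Term :=
  (subst (single x t) e.1, subst (single x t) e.2)

/-- The rewrite rules of the typed unification algorithm. -/
inductive Step : Config → Config → Prop
  | decompose (f : ℕ) (ts ss : List Term) (R : Multiset (Term × Term)) (F : Bool)
      (h : ts.length = ss.length) :
      Step (.state ((Term.app f ts, Term.app f ss) ::ₘ R) F)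
           (.state (↑(ts.zip ss) + R) F)
  | clash (f g : ℕ) (ts ss : List Term) (R : Multiset (Term × Term)) (F : Bool)
      (h : f ≠ g ∨ ts.length ≠ ss.length) :
      Step (.state ((Term.app f ts, Term.app g ss) ::ₘ R) F) .wrong
  | constDel (c : ℕ) (τ : Ty) (R : Multiset (Term × Term)) (F : Bool) :
      Step (.state ((Term.const c τ, Term.const c τ) ::ₘ R) F) (.state R F)
  | constFalse (c d : ℕ) (τ : Ty) (R : Multiset (Term × Term)) (F : Bool) (h : c ≠ d) :
      Step (.state ((Term.const c τ, Term.const d τ) ::ₘ R) F) (.state R false)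
  | constWrong (c d : ℕ) (τ σ : Ty) (R : Multiset (Term × Term)) (F : Bool) (h : τ ≠ σ) :
      Step (.state ((Term.const c τ, Term.const d σ) ::ₘ R) F) .wrong
  | constApp (c : ℕ) (τ : Ty) (f : ℕ) (ts : List Term) (R : Multiset (Term × Term)) (F : Bool) :
      Step (.state ((Term.const c τ, Term.app f ts) ::ₘ R) F) .wrong
  | appConst (c : ℕ) (τ : Ty) (f : ℕ) (ts : List Term) (R : Multiset (Term × Term)) (F : Bool) :
      Step (.state ((Term.app f ts, Term.const c τ) ::ₘ R) F) .wrong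
  | varDel (x : ℕ) (R : Multiset (Term × Term)) (F : Bool) :
      Step (.state ((Term.var x, Term.var x) ::ₘ R) F) (.state R F)
  | orient (x : ℕ) (t : Term) (R : Multiset (Term × Term)) (F : Bool)
      (h : ∀ y, t ≠ Term.var y) :
      Step (.state ((t, Term.var x) ::ₘ R) F) (.state ((Term.var x, t) ::ₘ R) F)
  | eliminate (x : ℕ) (t : Term) (R : Multiset (Term × Term)) (F : Bool)
      (h₁ : occurs x t = false)
      (h₂ : ∃ e ∈ R, occurs x e.1 = true ∨ occurs x e.2 = true) :
      Step (.state ((Term.var x, t) ::ₘ R) F)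
           (.state ((Term.var x, t) ::ₘ R.map (substEq x t)) F)
  | occursFail (x : ℕ) (t : Term) (R : Multiset (Term × Term)) (F : Bool)
      (h₁ : occurs x t = true) (h₂ : t ≠ Term.var x) :
      Step (.state ((Term.var x, t) ::ₘ R) F) (.state R false)

/-- Reachability by rewrite steps. -/
def Reaches : Config → Config → Prop := Relation.ReflTransGen Step

/-- A configuration to which no rule applies. -/
def NormalCfg (c : Config) : Prop := ∀ c', ¬ Step c c'

/-- The typed unification algorithm on input S outputs wrong. -/
def OutputsWrong (S : Multiset (Term × Term)) : Prop :=
  Reaches (Config.state S true) Config.wrong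

/-- The typed unification algorithm on input S outputs false. -/
def OutputsFalse (S : Multiset (Term × Term)) : Prop :=
  ∃ S', Reaches (Config.state S true) (Config.state S' false) ∧ NormalCfg (Config.state S' false)

/-- The typed unification algorithm on input S₀ succeeds with solved set S. -/
def OutputsSet (S₀ S : Multiset (Term × Term)) : Prop :=
  Reaches (Config.state S₀ true) (Config.state S true) ∧ NormalCfg (Config.state S true)

/-- θ is the substitution determined by a solved set S of equations. -/
def Represents (θ : ℕ → Term) (S : Multiset (Term × Term)) : Prop :=
  (∀ x t, (Term.var x, t) ∈ S → θ x = t) ∧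
  (∀ x, (∀ t, (Term.var x, t) ∉ S) → θ x = Term.var x)


section Aux

mutual
theorem subst_comp_t (θ η : ℕ → Term) : ∀ t, subst θ (subst η t) = subst (comp θ η) t
  | .var x => rfl
  | .const _ _ => rfl
  | .app f ts => by simp [subst, subst_comp_l θ η ts]
theorem subst_comp_l (θ η : ℕ → Term) : ∀ ts, substList θ (substList η ts) = substList (comp θ η) ts
  | [] => rfl
  | t :: ts => by simp [substList, subst_comp_t θ η t, subst_comp_l θ η ts]
end

mutual
theorem subst_fix_t (θ : ℕ → Term) : ∀ t, (∀ y, occurs y t = true → θ y = .var y) → subst θ t = t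
  | .var x, h => by simpa [subst] using h x (by simp [occurs])
  | .const _ _, _ => rfl
  | .app f ts, h => by
      simp only [subst, Term.app.injEq, true_and]
      exact subst_fix_l θ ts (fun y hy => h y (by simpa [occurs] using hy))
theorem subst_fix_l (θ : ℕ → Term) : ∀ ts, (∀ y, occursList y ts = true → θ y = .var y) → substList θ ts = ts
  | [], _ => rfl
  | t :: ts, h => by
      simp only [substList, List.cons.injEq]
      exact ⟨subst_fix_t θ t (fun y hy => h y (by simp [occursList, hy])),
             subst_fix_l θ ts (fun y hy => h y (by simp [occursList, hy]))⟩
end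

theorem substList_eq_map (θ : ℕ → Term) (ts : List Term) : substList θ ts = ts.map (subst θ) := by
  induction ts with
  | nil => rfl
  | cons t ts ih => simp [substList, ih]

theorem elim_comp (θ : ℕ → Term) (x : ℕ) (t : Term) (h : θ x = subst θ t) :
    comp θ (single x t) = θ := by
  funext y
  by_cases hy : y = x
  · subst hy; simp [comp, single, h]
  · simp [comp, single, hy, subst]

theorem elim_subst (θ : ℕ → Term) (x : ℕ) (t : Term) (h : θ x = subst θ t) (s : Term) :
    subst θ (subst (single x t) s) = subst θ s := by
  rw [subst_comp_t, elim_comp θ x t h]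

theorem map_eq_map_iff_zip (f : Term → Term) :
    ∀ ts ss : List Term, ts.length = ss.length →
      (ts.map f = ss.map f ↔ ∀ p ∈ ts.zip ss, f p.1 = f p.2) := by
  intro ts
  induction ts with
  | nil =>
    intro ss h
    cases ss with
    | nil => simp
    | cons s ss => simp at h
  | cons t ts ih =>
    intro ss h
    cases ss with
    | nil => simp at h
    | cons s ss =>
      simp only [List.length_cons, Nat.succ.injEq] at h
      simp only [List.map_cons, List.cons.injEq, List.zip_cons_cons, List.mem_cons,
        forall_eq_or_imp, ih ss h]

/-- η unifies every equation in M. -/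
def Unif (η : ℕ → Term) (M : Multiset (Term × Term)) : Prop :=
  ∀ e ∈ M, subst η e.1 = subst η e.2

theorem unif_cons {η : ℕ → Term} {e : Term × Term} {M : Multiset (Term × Term)} :
    Unif η (e ::ₘ M) ↔ subst η e.1 = subst η e.2 ∧ Unif η M := by
  simp [Unif]

theorem step_pres (η : ℕ → Term) {M M' : Multiset (Term × Term)}
    (h : Step (.state M true) (.state M' true)) : Unif η M ↔ Unif η M' := by
  cases h with
  | decompose f ts ss R F hl =>
    rw [unif_cons]
    have h1 : Unif η (↑(ts.zip ss) + R) ↔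
        (∀ p ∈ ts.zip ss, subst η p.1 = subst η p.2) ∧ Unif η R := by
      simp [Unif, or_imp, forall_and]
    rw [h1]
    simp only [subst, Term.app.injEq, true_and, substList_eq_map]
    rw [map_eq_map_iff_zip _ _ _ hl]
  | constDel c τ R F => rw [unif_cons]; simp [subst]
  | varDel x R F => rw [unif_cons]; simp [subst]
  | orient x t R F h =>
    rw [unif_cons, unif_cons]
    constructor
    · rintro ⟨h1, h2⟩; exact ⟨h1.symm, h2⟩
    · rintro ⟨h1, h2⟩; exact ⟨h1.symm, h2⟩
  | eliminate x t R F h1 h2 =>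
    rw [unif_cons, unif_cons]
    constructor
    · rintro ⟨hh, hR⟩
      refine ⟨hh, ?_⟩
      intro e he
      simp only [Multiset.mem_map] at he
      obtain ⟨e', he', rfl⟩ := he
      have hx : η x = subst η t := hh
      simp only [substEq]
      rw [elim_subst η x t hx, elim_subst η x t hx]
      exact hR e' he'
    · rintro ⟨hh, hR⟩
      refine ⟨hh, ?_⟩
      intro e he
      have hx : η x = subst η t := hh
      have := hR (substEq x t e) (Multiset.mem_map_of_mem _ he)
      simpa only [substEq, elim_subst η x t hx] using this

theorem step_flag {M M' : Multiset (Term × Term)} {F : Bool}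
    (h : Step (.state M F) (.state M' true)) : F = true := by
  cases h <;> rfl

theorem reaches_pres (η : ℕ → Term) {S₀ : Multiset (Term × Term)} :
    ∀ {c : Config}, Reaches (.state S₀ true) c → ∀ M, c = .state M true →
      (Unif η S₀ ↔ Unif η M) := by
  intro c h
  induction h with
  | refl => intro M hM; cases hM; rfl
  | tail hab hbc ih =>
    rename_i b c'
    intro M hM
    subst hM
    cases b with
    | wrong => cases hbc
    | state Mb Fb =>
      have hFb : Fb = true := step_flag hbc
      subst hFb
      exact (ih _ rfl).trans (step_pres η hbc)

theorem solved_var {S : Multiset (Term × Term)} (hN : NormalCfg (.state S true)) :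
    ∀ e ∈ S, ∃ x t, e = (Term.var x, t) := by
  intro e he
  obtain ⟨R, hR⟩ := Multiset.exists_cons_of_mem he
  subst hR
  obtain ⟨a, b⟩ := e
  cases a with
  | var x => exact ⟨x, b, rfl⟩
  | const c τ =>
    cases b with
    | var y => exact absurd (Step.orient y (.const c τ) R true (fun z => by simp)) (hN _)
    | const d σ =>
      by_cases hτ : τ = σ
      · subst hτ
        by_cases hc : c = d
        · subst hc; exact absurd (Step.constDel c τ R true) (hN _)
        · exact absurd (Step.constFalse c d τ R true hc) (hN _)
      · exact absurd (Step.constWrong c d τ σ R true hτ) (hN _)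
    | app f ts => exact absurd (Step.constApp c τ f ts R true) (hN _)
  | app f ts =>
    cases b with
    | var y => exact absurd (Step.orient y (.app f ts) R true (fun z => by simp)) (hN _)
    | const c τ => exact absurd (Step.appConst c τ f ts R true) (hN _)
    | app g ss =>
      by_cases hfg : f = g ∧ ts.length = ss.length
      · obtain ⟨rfl, hl⟩ := hfg
        exact absurd (Step.decompose f ts ss R true hl) (hN _)
      · rw [not_and_or] at hfg
        exact absurd (Step.clash f g ts ss R true hfg) (hN _)

theorem solved_props {S : Multiset (Term × Term)} (hN : NormalCfg (.state S true))
    {x : ℕ} {t : Term} {R : Multiset (Term × Term)} (hR : S = (Term.var x, t) ::ₘ R) :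
    occurs x t = false ∧ ∀ e' ∈ R, occurs x e'.1 = false ∧ occurs x e'.2 = false := by
  subst hR
  have hocc : occurs x t = false := by
    by_cases ht : t = .var x
    · subst ht; exact absurd (Step.varDel x R true) (hN _)
    · by_cases hocc : occurs x t = true
      · exact absurd (Step.occursFail x t R true hocc ht) (hN _)
      · simpa using hocc
  refine ⟨hocc, ?_⟩
  intro e' he'
  by_contra hcon
  have h2 : ∃ e ∈ R, occurs x e.1 = true ∨ occurs x e.2 = true := by
    refine ⟨e', he', ?_⟩
    rcases Bool.eq_false_or_eq_true (occurs x e'.1) with h | h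
    · exact Or.inl h
    · rcases Bool.eq_false_or_eq_true (occurs x e'.2) with h' | h'
      · exact Or.inr h'
      · exact absurd ⟨h, h'⟩ hcon
  exact absurd (Step.eliminate x t R true hocc h2) (hN _)

end Aux

/-- if typed unification on t₁ and t₂ outputs a solved set S,
then the substitution determined by S is an idempotent most general unifier
of t₁ and t₂. -/
theorem typed_unification_mgu (t₁ t₂ : Term) (S : Multiset (Term × Term))
    (θ : ℕ → Term) (hS : OutputsSet {(t₁, t₂)} S) (hθ : Represents θ S) :
    Idempotent θ ∧ IsMGU θ t₁ t₂ := by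
  obtain ⟨hreach, hnorm⟩ := hS
  -- every variable occurring in a right-hand side of S is fixed by θ
  have hvar_free : ∀ x t, (Term.var x, t) ∈ S → ∀ y, occurs y t = true → θ y = Term.var y := by
    intro x t hxt y hy
    by_cases hby : ∀ s, (Term.var y, s) ∉ S
    · exact hθ.2 y hby
    · push_neg at hby
      obtain ⟨s, hs⟩ := hby
      obtain ⟨R, hR⟩ := Multiset.exists_cons_of_mem hs
      obtain ⟨hocc, hothers⟩ := solved_props hnorm hR
      rw [hR, Multiset.mem_cons] at hxt
      rcases hxt with heq | hmem
      · simp only [Prod.mk.injEq, Term.var.injEq] at heq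
        obtain ⟨rfl, rfl⟩ := heq
        exact absurd hy (by simp [hocc])
      · exact absurd hy (by simp [(hothers _ hmem).2])
  have hfix : ∀ x, subst θ (θ x) = θ x := by
    intro x
    by_cases hb : ∀ t, (Term.var x, t) ∉ S
    · rw [hθ.2 x hb]; simp [subst, hθ.2 x hb]
    · push_neg at hb
      obtain ⟨t, ht⟩ := hb
      rw [hθ.1 x t ht]
      exact subst_fix_t θ t (hvar_free x t ht)
  have hcomp : comp θ θ = θ := funext hfix
  have hidem : Idempotent θ := by
    intro t; rw [subst_comp_t, hcomp]
  have hUnifS : Unif θ S := by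
    intro e he
    obtain ⟨x, t, rfl⟩ := solved_var hnorm e he
    have h1 : θ x = t := hθ.1 x t he
    show subst θ (Term.var x) = subst θ t
    rw [subst_fix_t θ t (hvar_free x t he)]
    simpa [subst] using h1
  have hpres : ∀ η, Unif η {(t₁, t₂)} ↔ Unif η S :=
    fun η => reaches_pres η hreach S rfl
  have hsing : ∀ η, Unif η {(t₁, t₂)} ↔ IsUnifier η t₁ t₂ := by
    intro η; simp [Unif, IsUnifier]
  refine ⟨hidem, ?_, ?_⟩
  · exact (hsing θ).mp ((hpres θ).mpr hUnifS)
  · intro η hη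
    have hηS : Unif η S := (hpres η).mp ((hsing η).mpr hη)
    refine ⟨η, fun x => ?_⟩
    by_cases hb : ∀ t, (Term.var x, t) ∉ S
    · rw [hθ.2 x hb]; simp [subst]
    · push_neg at hb
      obtain ⟨t, ht⟩ := hb
      rw [hθ.1 x t ht]
      exact hηS (Term.var x, t) ht
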